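/- In a finite turn-based stochastic game, for any Minimizer strategy τ* optimal for ◇F, any Maximizer strategy σ, any k ≥ 0, and any l with l ≤ V(s') for all s' ∈ S?, it holds that V(s) ≥ inf_τ ( P_s^{σ,τ}(◇^{≤k}F) + P_s^{σ,τ}(□^{≤k}S?)·l ) for all states s. -/
import Mathlib


/-- `reachB δ F isMax σ τ k h s` : probability of reaching the target set `F` within `k`
steps in the turn-based stochastic game with transition function `δ`, starting from state
`s` after history `h`, when Maximizer plays the (history-dependent) strategy `σ` and
Minimizer plays `τ`. -/
noncomputable def reachB {S A : Type} [Fintype S] [DecidableEq S]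
    (δ : S → A → S → ℝ) (F : Finset S) (isMax : S → Bool)
    (σ τ : List (S × A) → S → A) : ℕ → List (S × A) → S → ℝ
  | 0, _, s => if s ∈ F then 1 else 0
  | k + 1, h, s =>
      if s ∈ F then 1
      else
        ∑ s' : S,
          δ s (if isMax s then σ h s else τ h s) s' *
            reachB δ F isMax σ τ k (h ++ [(s, if isMax s then σ h s else τ h s)]) s'

/-- `stayB δ SQ isMax σ τ k h s` : probability that the play remains in the unknown set
`SQ` during the first `k` steps. -/
noncomputable def stayB {S A : Type} [Fintype S] [DecidableEq S]
    (δ : S → A → S → ℝ) (SQ : Finset S) (isMax : S → Bool)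
    (σ τ : List (S × A) → S → A) : ℕ → List (S × A) → S → ℝ
  | 0, _, s => if s ∈ SQ then 1 else 0
  | k + 1, h, s =>
      if s ∈ SQ then
        ∑ s' : S,
          δ s (if isMax s then σ h s else τ h s) s' *
            stayB δ SQ isMax σ τ k (h ++ [(s, if isMax s then σ h s else τ h s)]) s'
      else 0

/-- History-dependent strategies respecting the available actions `Av`. -/
def Strat {S A : Type} (Av : S → Finset A) : Type :=
  {f : List (S × A) → S → A // ∀ h s, f h s ∈ Av s}

/-- `pReach δ F isMax σ τ s = P_s^{σ,τ}(◇F)`, the probability of eventually reaching `F`,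
as the supremum of the step-bounded reachability probabilities. -/
noncomputable def pReach {S A : Type} [Fintype S] [DecidableEq S]
    (δ : S → A → S → ℝ) (F : Finset S) (isMax : S → Bool)
    (σ τ : List (S × A) → S → A) (s : S) : ℝ :=
  ⨆ k : ℕ, reachB δ F isMax σ τ k [] s

/-- The value `V(s) = sup_σ inf_τ P_s^{σ,τ}(◇F)` of the reachability game. -/
noncomputable def gameValue {S A : Type} [Fintype S] [DecidableEq S]
    (δ : S → A → S → ℝ) (Av : S → Finset A) (F : Finset S) (isMax : S → Bool)
    (s : S) : ℝ :=
  ⨆ σ : Strat Av, ⨅ τ : Strat Av, pReach δ F isMax σ.1 τ.1 s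

section Aux

variable {S A : Type} [Fintype S] [DecidableEq S]
variable (δ : S → A → S → ℝ) (Av : S → Finset A) (isMax : S → Bool) (F SQ : Finset S)

/-- shift a strategy function by a history prefix -/
def shiftF (h0 : List (S × A)) (f : List (S × A) → S → A) : List (S × A) → S → A :=
  fun h s => f (h0 ++ h) s

/-- shift a strategy by a history prefix -/
def shiftS (h0 : List (S × A)) (τ : Strat Av) : Strat Av :=
  ⟨shiftF h0 τ.1, fun h s => τ.2 (h0 ++ h) s⟩

lemma reachB_shift (σ τ : List (S × A) → S → A) (h0 : List (S × A)) :
    ∀ (k : ℕ) (h : List (S × A)) (s : S),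
      reachB δ F isMax σ τ k (h0 ++ h) s
        = reachB δ F isMax (shiftF h0 σ) (shiftF h0 τ) k h s := by
  intro k
  induction k with
  | zero => intro h s; rfl
  | succ k ih =>
      intro h s
      simp only [reachB, shiftF]
      by_cases hF : s ∈ F
      · simp [hF]
      · simp only [hF, if_false]
        refine Finset.sum_congr rfl fun s' _ => ?_
        rw [List.append_assoc]
        rw [ih]

lemma stayB_shift (σ τ : List (S × A) → S → A) (h0 : List (S × A)) :
    ∀ (k : ℕ) (h : List (S × A)) (s : S),
      stayB δ SQ isMax σ τ k (h0 ++ h) s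
        = stayB δ SQ isMax (shiftF h0 σ) (shiftF h0 τ) k h s := by
  intro k
  induction k with
  | zero => intro h s; rfl
  | succ k ih =>
      intro h s
      simp only [stayB, shiftF]
      by_cases hQ : s ∈ SQ
      · simp only [hQ, if_true]
        refine Finset.sum_congr rfl fun s' _ => ?_
        rw [List.append_assoc]
        rw [ih]
      · simp [hQ]

lemma reachB_cong (τ : List (S × A) → S → A) :
    ∀ (k : ℕ) (h : List (S × A)) (s : S) (σ₁ σ₂ : List (S × A) → S → A),
      σ₁ h s = σ₂ h s →
      (∀ (b : A) (h'' : List (S × A)) (t : S),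
        σ₁ (h ++ (s, b) :: h'') t = σ₂ (h ++ (s, b) :: h'') t) →
      reachB δ F isMax σ₁ τ k h s = reachB δ F isMax σ₂ τ k h s := by
  intro k
  induction k with
  | zero => intro h s σ₁ σ₂ _ _; rfl
  | succ k ih =>
      intro h s σ₁ σ₂ h1 h2
      simp only [reachB]
      by_cases hF : s ∈ F
      · simp [hF]
      · simp only [hF, if_false, h1]
        refine Finset.sum_congr rfl fun s' _ => ?_
        congr 1
        refine ih (h ++ [(s, if isMax s = true then σ₂ h s else τ h s)]) s' σ₁ σ₂ ?_ ?_
        · have := h2 (if isMax s = true then σ₂ h s else τ h s) [] s'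
          simpa using this
        · intro b h'' t
          have := h2 (if isMax s = true then σ₂ h s else τ h s) ((s', b) :: h'') t
          simpa using this

end Aux
section Aux2

variable {S A : Type} [Fintype S] [DecidableEq S]
variable (δ : S → A → S → ℝ) (Av : S → Finset A) (isMax : S → Bool) (F SQ : Finset S)

lemma reachB_nonneg (hδ0 : ∀ s a s', 0 ≤ δ s a s') (σ τ : List (S × A) → S → A) :
    ∀ (k : ℕ) (h : List (S × A)) (s : S), 0 ≤ reachB δ F isMax σ τ k h s := by
  intro k
  induction k with
  | zero => intro h s; simp only [reachB]; positivity
  | succ k ih =>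
      intro h s
      simp only [reachB]
      by_cases hF : s ∈ F
      · simp [hF]
      · simp only [hF, if_false]
        exact Finset.sum_nonneg fun s' _ => mul_nonneg (hδ0 _ _ _) (ih _ _)

lemma stayB_nonneg (hδ0 : ∀ s a s', 0 ≤ δ s a s') (σ τ : List (S × A) → S → A) :
    ∀ (k : ℕ) (h : List (S × A)) (s : S), 0 ≤ stayB δ SQ isMax σ τ k h s := by
  intro k
  induction k with
  | zero => intro h s; simp only [stayB]; positivity
  | succ k ih =>
      intro h s
      simp only [stayB]
      by_cases hQ : s ∈ SQ
      · simp only [hQ, if_true]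
        exact Finset.sum_nonneg fun s' _ => mul_nonneg (hδ0 _ _ _) (ih _ _)
      · simp [hQ]

lemma reachB_le_one (hδ0 : ∀ s a s', 0 ≤ δ s a s')
    (hδ1 : ∀ s, ∀ a ∈ Av s, ∑ s' : S, δ s a s' = 1) (σ τ : Strat Av) :
    ∀ (k : ℕ) (h : List (S × A)) (s : S), reachB δ F isMax σ.1 τ.1 k h s ≤ 1 := by
  intro k
  induction k with
  | zero => intro h s; simp only [reachB]; split <;> norm_num
  | succ k ih =>
      intro h s
      simp only [reachB]
      by_cases hF : s ∈ F
      · simp [hF]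
      · simp only [hF, if_false]
        have ha : (if isMax s = true then σ.1 h s else τ.1 h s) ∈ Av s := by
          split
          · exact σ.2 h s
          · exact τ.2 h s
        calc ∑ s' : S, δ s _ s' * reachB δ F isMax σ.1 τ.1 k _ s'
            ≤ ∑ s' : S, δ s (if isMax s = true then σ.1 h s else τ.1 h s) s' * 1 :=
              Finset.sum_le_sum fun s' _ =>
                mul_le_mul_of_nonneg_left (ih _ _) (hδ0 _ _ _)
          _ = 1 := by simp [hδ1 s _ ha]

lemma stayB_le_one (hδ0 : ∀ s a s', 0 ≤ δ s a s')
    (hδ1 : ∀ s, ∀ a ∈ Av s, ∑ s' : S, δ s a s' = 1) (σ τ : Strat Av) :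
    ∀ (k : ℕ) (h : List (S × A)) (s : S), stayB δ SQ isMax σ.1 τ.1 k h s ≤ 1 := by
  intro k
  induction k with
  | zero => intro h s; simp only [stayB]; split <;> norm_num
  | succ k ih =>
      intro h s
      simp only [stayB]
      by_cases hQ : s ∈ SQ
      · simp only [hQ, if_true]
        have ha : (if isMax s = true then σ.1 h s else τ.1 h s) ∈ Av s := by
          split
          · exact σ.2 h s
          · exact τ.2 h s
        calc ∑ s' : S, δ s _ s' * stayB δ SQ isMax σ.1 τ.1 k _ s'
            ≤ ∑ s' : S, δ s (if isMax s = true then σ.1 h s else τ.1 h s) s' * 1 :=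
              Finset.sum_le_sum fun s' _ =>
                mul_le_mul_of_nonneg_left (ih _ _) (hδ0 _ _ _)
          _ = 1 := by simp [hδ1 s _ ha]
      · simp [hQ]

lemma reachB_succ_le (hδ0 : ∀ s a s', 0 ≤ δ s a s') (σ τ : List (S × A) → S → A) :
    ∀ (k : ℕ) (h : List (S × A)) (s : S),
      reachB δ F isMax σ τ k h s ≤ reachB δ F isMax σ τ (k + 1) h s := by
  intro k
  induction k with
  | zero =>
      intro h s
      simp only [reachB]
      by_cases hF : s ∈ F
      · simp [hF]
      · simp only [hF, if_false]
        refine Finset.sum_nonneg fun s' _ => mul_nonneg (hδ0 _ _ _) ?_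
        split <;> norm_num
  | succ k ih =>
      intro h s
      simp only [reachB]
      by_cases hF : s ∈ F
      · simp [hF]
      · simp only [hF, if_false]
        exact Finset.sum_le_sum fun s' _ =>
          mul_le_mul_of_nonneg_left (ih _ _) (hδ0 _ _ _)

lemma reachB_mono (hδ0 : ∀ s a s', 0 ≤ δ s a s') (σ τ : List (S × A) → S → A)
    (h : List (S × A)) (s : S) :
    Monotone (fun k => reachB δ F isMax σ τ k h s) :=
  monotone_nat_of_le_succ fun k => reachB_succ_le δ isMax F hδ0 σ τ k h s

end Aux2
set_option linter.unusedSectionVars false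
section Aux3

variable {S A : Type} [Fintype S] [DecidableEq S]
variable (δ : S → A → S → ℝ) (Av : S → Finset A) (isMax : S → Bool) (F SQ : Finset S)

lemma strat_nonempty (hAv : ∀ s, (Av s).Nonempty) : Nonempty (Strat Av) :=
  ⟨⟨fun _ s => (hAv s).choose, fun _ s => (hAv s).choose_spec⟩⟩

variable (hδ0 : ∀ s a s', 0 ≤ δ s a s')
variable (hδ1 : ∀ s, ∀ a ∈ Av s, ∑ s' : S, δ s a s' = 1)
include hδ0 hδ1

lemma pReach_bdd (σ τ : Strat Av) (s : S) :
    BddAbove (Set.range fun k => reachB δ F isMax σ.1 τ.1 k [] s) := by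
  refine ⟨1, ?_⟩
  rintro x ⟨k, rfl⟩
  exact reachB_le_one δ Av isMax F hδ0 hδ1 σ τ k [] s

lemma reachB_le_pReach (σ τ : Strat Av) (k : ℕ) (s : S) :
    reachB δ F isMax σ.1 τ.1 k [] s ≤ pReach δ F isMax σ.1 τ.1 s :=
  le_ciSup (pReach_bdd δ Av isMax F hδ0 hδ1 σ τ s) k

lemma pReach_nonneg (σ τ : Strat Av) (s : S) : 0 ≤ pReach δ F isMax σ.1 τ.1 s :=
  le_trans (reachB_nonneg δ isMax F hδ0 σ.1 τ.1 0 [] s)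
    (reachB_le_pReach δ Av isMax F hδ0 hδ1 σ τ 0 s)

lemma pReach_le_one (σ τ : Strat Av) (s : S) : pReach δ F isMax σ.1 τ.1 s ≤ 1 :=
  ciSup_le fun k => reachB_le_one δ Av isMax F hδ0 hδ1 σ τ k [] s

lemma pReach_of_mem (σ τ : List (S × A) → S → A) (s : S) (hs : s ∈ F) :
    pReach δ F isMax σ τ s = 1 := by
  have h1 : ∀ k, reachB δ F isMax σ τ k [] s = 1 := by
    intro k; cases k <;> simp [reachB, hs]
  unfold pReach
  simp only [h1]
  exact ciSup_const

/-- `Wv τ s = sup_σ pReach σ τ s`. -/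
noncomputable def Wv (τ : Strat Av) (s : S) : ℝ :=
  ⨆ σ : Strat Av, pReach δ F isMax σ.1 τ.1 s

lemma Wv_bdd (τ : Strat Av) (s : S) :
    BddAbove (Set.range fun σ : Strat Av => pReach δ F isMax σ.1 τ.1 s) := by
  refine ⟨1, ?_⟩
  rintro x ⟨σ, rfl⟩
  exact pReach_le_one δ Av isMax F hδ0 hδ1 σ τ s

lemma pReach_le_Wv (σ τ : Strat Av) (s : S) :
    pReach δ F isMax σ.1 τ.1 s ≤ Wv δ Av isMax F τ s :=
  le_ciSup (Wv_bdd δ Av isMax F hδ0 hδ1 τ s) σ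

lemma Wv_nonneg (hAv : ∀ s, (Av s).Nonempty) (τ : Strat Av) (s : S) :
    0 ≤ Wv δ Av isMax F τ s := by
  obtain ⟨σ0⟩ := strat_nonempty Av hAv
  exact le_trans (pReach_nonneg δ Av isMax F hδ0 hδ1 σ0 τ s)
    (pReach_le_Wv δ Av isMax F hδ0 hδ1 σ0 τ s)

lemma one_le_Wv (hAv : ∀ s, (Av s).Nonempty) (τ : Strat Av) (s : S) (hs : s ∈ F) :
    1 ≤ Wv δ Av isMax F τ s := by
  obtain ⟨σ0⟩ := strat_nonempty Av hAv
  have := pReach_le_Wv δ Av isMax F hδ0 hδ1 σ0 τ s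
  rwa [pReach_of_mem δ Av isMax F hδ0 hδ1 σ0.1 τ.1 s hs] at this

lemma gameValue_le_Wv (hAv : ∀ s, (Av s).Nonempty) (τ' : Strat Av) (s : S) :
    gameValue δ Av F isMax s ≤ Wv δ Av isMax F τ' s := by
  have : Nonempty (Strat Av) := strat_nonempty Av hAv
  refine ciSup_le fun σ => ?_
  have hbb : BddBelow (Set.range fun τ : Strat Av => pReach δ F isMax σ.1 τ.1 s) := by
    refine ⟨0, ?_⟩
    rintro x ⟨τ, rfl⟩
    exact pReach_nonneg δ Av isMax F hδ0 hδ1 σ τ s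
  exact le_trans (ciInf_le hbb τ') (pReach_le_Wv δ Av isMax F hδ0 hδ1 σ τ' s)

end Aux3
section Aux4
set_option linter.unusedSectionVars false

variable {S A : Type} [Fintype S] [DecidableEq S]
variable (δ : S → A → S → ℝ) (Av : S → Finset A) (isMax : S → Bool) (F : Finset S)

/-- first state of a continuation history, defaulting to the current state -/
def firstSt : List (S × A) → S → S
  | [], t => t
  | e :: _, _ => e.1

/-- A combined Maximizer strategy: play `f0` first, then follow the
strategy `g s'` selected according to the first state visited after the initial step. -/
noncomputable def combStrat (f0 : S → A) (hf0 : ∀ t, f0 t ∈ Av t) (g : S → Strat Av) :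
    Strat Av :=
  ⟨fun h t => match h with
    | [] => f0 t
    | _ :: h' => (g (firstSt h' t)).1 h' t,
   by
    intro h t
    match h with
    | [] => exact hf0 t
    | e :: h' => exact (g (firstSt h' t)).2 h' t⟩

lemma bellman (hδ0 : ∀ s a s', 0 ≤ δ s a s')
    (hδ1 : ∀ s, ∀ a ∈ Av s, ∑ s' : S, δ s a s' = 1)
    (hAv : ∀ s, (Av s).Nonempty)
    (τ' : Strat Av) (s : S) (hsF : s ∉ F) (a : A) (ha : a ∈ Av s)
    (hact : isMax s = false → a = τ'.1 [] s) :
    ∑ s' : S, δ s a s' * Wv δ Av isMax F (shiftS Av [(s, a)] τ') s'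
      ≤ Wv δ Av isMax F τ' s := by
  have hne : Nonempty (Strat Av) := strat_nonempty Av hAv
  refine le_of_forall_pos_le_add fun ε hε => ?_
  have h1 : ∀ s' : S, ∃ σ' : Strat Av,
      Wv δ Av isMax F (shiftS Av [(s, a)] τ') s' - ε / 2
        < pReach δ F isMax σ'.1 (shiftS Av [(s, a)] τ').1 s' := by
    intro s'
    have hlt : Wv δ Av isMax F (shiftS Av [(s, a)] τ') s' - ε / 2
        < ⨆ σ' : Strat Av, pReach δ F isMax σ'.1 (shiftS Av [(s, a)] τ').1 s' :=
      sub_lt_self _ (by positivity)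
    exact exists_lt_of_lt_ciSup hlt
  choose g hg using h1
  have h2 : ∀ s' : S, ∃ k : ℕ,
      pReach δ F isMax (g s').1 (shiftS Av [(s, a)] τ').1 s' - ε / 2
        < reachB δ F isMax (g s').1 (shiftS Av [(s, a)] τ').1 k [] s' := by
    intro s'
    have hlt : pReach δ F isMax (g s').1 (shiftS Av [(s, a)] τ').1 s' - ε / 2
        < ⨆ k : ℕ, reachB δ F isMax (g s').1 (shiftS Av [(s, a)] τ').1 k [] s' :=
      sub_lt_self _ (by positivity)
    exact exists_lt_of_lt_ciSup hlt
  choose kf hk using h2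
  set K := Finset.univ.sup kf with hK
  set f0 : S → A := fun t => if t = s then a else (hAv t).choose with hf0def
  have hf0 : ∀ t, f0 t ∈ Av t := by
    intro t
    simp only [hf0def]
    split
    · rename_i ht; subst ht; exact ha
    · exact (hAv t).choose_spec
  set σh : Strat Av := combStrat Av f0 hf0 g with hσh
  have hσ0 : σh.1 [] s = a := by
    show f0 s = a
    simp [hf0def]
  have hacts : (if isMax s = true then σh.1 [] s else τ'.1 [] s) = a := by
    cases hM : isMax s with
    | false => simpa using (hact hM).symm
    | true => simpa using hσ0
  have hkey : ∀ s' : S,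
      reachB δ F isMax σh.1 τ'.1 K [(s, a)] s'
        = reachB δ F isMax (g s').1 (shiftS Av [(s, a)] τ').1 K [] s' := by
    intro s'
    have h3 : ([(s, a)] : List (S × A)) = [(s, a)] ++ [] := rfl
    rw [h3, reachB_shift δ isMax F σh.1 τ'.1 [(s, a)] K [] s']
    exact reachB_cong δ isMax F (shiftS Av [(s, a)] τ').1 K [] s' _ _ rfl
      (fun b h'' t => rfl)
  have hstep : reachB δ F isMax σh.1 τ'.1 (K + 1) [] s
      = ∑ s' : S, δ s a s' *
          reachB δ F isMax (g s').1 (shiftS Av [(s, a)] τ').1 K [] s' := by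
    simp only [reachB]
    rw [if_neg hsF]
    simp only [hacts, List.nil_append]
    exact Finset.sum_congr rfl fun s' _ => by rw [hkey s']
  have hKk : ∀ s' : S, kf s' ≤ K := fun s' => Finset.le_sup (Finset.mem_univ s')
  calc ∑ s' : S, δ s a s' * Wv δ Av isMax F (shiftS Av [(s, a)] τ') s'
      ≤ ∑ s' : S, δ s a s' *
          (reachB δ F isMax (g s').1 (shiftS Av [(s, a)] τ').1 K [] s' + ε) := by
        refine Finset.sum_le_sum fun s' _ => mul_le_mul_of_nonneg_left ?_ (hδ0 _ _ _)
        have m1 := hg s'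
        have m2 := hk s'
        have m3 : reachB δ F isMax (g s').1 (shiftS Av [(s, a)] τ').1 (kf s') [] s'
            ≤ reachB δ F isMax (g s').1 (shiftS Av [(s, a)] τ').1 K [] s' :=
          reachB_mono δ isMax F hδ0 (g s').1 (shiftS Av [(s, a)] τ').1 [] s' (hKk s')
        linarith
    _ = (∑ s' : S, δ s a s' *
          reachB δ F isMax (g s').1 (shiftS Av [(s, a)] τ').1 K [] s') + ε := by
        simp only [mul_add, Finset.sum_add_distrib, ← Finset.sum_mul, hδ1 s a ha, one_mul]
    _ = reachB δ F isMax σh.1 τ'.1 (K + 1) [] s + ε := by rw [hstep]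
    _ ≤ pReach δ F isMax σh.1 τ'.1 s + ε := by
        have := reachB_le_pReach δ Av isMax F hδ0 hδ1 σh τ' (K + 1) s
        linarith
    _ ≤ Wv δ Av isMax F τ' s + ε := by
        have := pReach_le_Wv δ Av isMax F hδ0 hδ1 σh τ' s
        linarith

end Aux4
section Aux5
set_option linter.unusedSectionVars false

variable {S A : Type} [Fintype S] [DecidableEq S]
variable (δ : S → A → S → ℝ) (Av : S → Finset A) (isMax : S → Bool) (F Z SQ : Finset S)

lemma main_ind (hδ0 : ∀ s a s', 0 ≤ δ s a s')
    (hδ1 : ∀ s, ∀ a ∈ Av s, ∑ s' : S, δ s a s' = 1)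
    (hAv : ∀ s, (Av s).Nonempty)
    (hpart : ∀ s, s ∈ SQ ↔ s ∉ F ∧ s ∉ Z)
    (hZ : ∀ s ∈ Z, ∀ σ τ : Strat Av, pReach δ F isMax σ.1 τ.1 s = 0)
    (l : ℝ)
    (hlW : ∀ s' ∈ SQ, ∀ τ' : Strat Av, l ≤ Wv δ Av isMax F τ' s') :
    ∀ (k : ℕ) (σg τ' : Strat Av) (s : S),
      reachB δ F isMax σg.1 τ'.1 k [] s + stayB δ SQ isMax σg.1 τ'.1 k [] s * l
        ≤ Wv δ Av isMax F τ' s := by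
  intro k
  induction k with
  | zero =>
      intro σg τ' s
      by_cases hF : s ∈ F
      · have hsq : s ∉ SQ := fun h => ((hpart s).1 h).1 hF
        simp only [reachB, stayB, if_pos hF, if_neg hsq]
        simpa using one_le_Wv δ Av isMax F hδ0 hδ1 hAv τ' s hF
      · by_cases hQ : s ∈ SQ
        · simp only [reachB, stayB, if_neg hF, if_pos hQ, one_mul, zero_add]
          exact hlW s hQ τ'
        · simp only [reachB, stayB, if_neg hF, if_neg hQ, zero_mul, add_zero]
          exact Wv_nonneg δ Av isMax F hδ0 hδ1 hAv τ' s
  | succ k ih =>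
      intro σg τ' s
      by_cases hF : s ∈ F
      · have hsq : s ∉ SQ := fun h => ((hpart s).1 h).1 hF
        simp only [reachB, stayB, if_pos hF, if_neg hsq]
        simpa using one_le_Wv δ Av isMax F hδ0 hδ1 hAv τ' s hF
      · by_cases hQ : s ∈ SQ
        · -- main case : one step in SQ
          set a := if isMax s = true then σg.1 [] s else τ'.1 [] s with hadef
          have ha : a ∈ Av s := by
            rw [hadef]
            split
            · exact σg.2 [] s
            · exact τ'.2 [] s
          have hact : isMax s = false → a = τ'.1 [] s := by
            intro hM
            rw [hadef, hM]
            simp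
          have hshr : ∀ s' : S, reachB δ F isMax σg.1 τ'.1 k [(s, a)] s'
              = reachB δ F isMax (shiftS Av [(s, a)] σg).1
                  (shiftS Av [(s, a)] τ').1 k [] s' := by
            intro s'
            have h3 : ([(s, a)] : List (S × A)) = [(s, a)] ++ [] := rfl
            rw [h3, reachB_shift δ isMax F σg.1 τ'.1 [(s, a)] k [] s']
            rfl
          have hshs : ∀ s' : S, stayB δ SQ isMax σg.1 τ'.1 k [(s, a)] s'
              = stayB δ SQ isMax (shiftS Av [(s, a)] σg).1
                  (shiftS Av [(s, a)] τ').1 k [] s' := by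
            intro s'
            have h3 : ([(s, a)] : List (S × A)) = [(s, a)] ++ [] := rfl
            rw [h3, stayB_shift δ isMax SQ σg.1 τ'.1 [(s, a)] k [] s']
            rfl
          have hexr : reachB δ F isMax σg.1 τ'.1 (k + 1) [] s
              = ∑ s' : S, δ s a s' * reachB δ F isMax σg.1 τ'.1 k [(s, a)] s' := by
            simp only [reachB]
            rw [if_neg hF, ← hadef]
            simp only [List.nil_append]
          have hexs : stayB δ SQ isMax σg.1 τ'.1 (k + 1) [] s
              = ∑ s' : S, δ s a s' * stayB δ SQ isMax σg.1 τ'.1 k [(s, a)] s' := by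
            simp only [stayB]
            rw [if_pos hQ, ← hadef]
            simp only [List.nil_append]
          rw [hexr, hexs]
          calc (∑ s' : S, δ s a s' * reachB δ F isMax σg.1 τ'.1 k [(s, a)] s')
                + (∑ s' : S, δ s a s' * stayB δ SQ isMax σg.1 τ'.1 k [(s, a)] s') * l
              = ∑ s' : S, δ s a s' *
                  (reachB δ F isMax σg.1 τ'.1 k [(s, a)] s'
                    + stayB δ SQ isMax σg.1 τ'.1 k [(s, a)] s' * l) := by
                rw [Finset.sum_mul, ← Finset.sum_add_distrib]
                exact Finset.sum_congr rfl fun s' _ => by ring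
            _ ≤ ∑ s' : S, δ s a s' * Wv δ Av isMax F (shiftS Av [(s, a)] τ') s' := by
                refine Finset.sum_le_sum fun s' _ =>
                  mul_le_mul_of_nonneg_left ?_ (hδ0 _ _ _)
                rw [hshr s', hshs s']
                exact ih (shiftS Av [(s, a)] σg) (shiftS Av [(s, a)] τ') s'
            _ ≤ Wv δ Av isMax F τ' s :=
                bellman δ Av isMax F hδ0 hδ1 hAv τ' s hF a ha hact
        · -- s is in Z
          have hsZ : s ∈ Z := by
            by_contra hz
            exact hQ ((hpart s).2 ⟨hF, hz⟩)
          have h0 : pReach δ F isMax σg.1 τ'.1 s = 0 := hZ s hsZ σg τ'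
          have hr : reachB δ F isMax σg.1 τ'.1 (k + 1) [] s ≤ 0 :=
            (reachB_le_pReach δ Av isMax F hδ0 hδ1 σg τ' (k + 1) s).trans h0.le
          have hst : stayB δ SQ isMax σg.1 τ'.1 (k + 1) [] s = 0 := by
            simp only [stayB]
            rw [if_neg hQ]
          rw [hst]
          simpa using hr.trans (Wv_nonneg δ Av isMax F hδ0 hδ1 hAv τ' s)

end Aux5
/-- Inequality (5), the dual lower bound: for any optimal Minimizer strategy `τ*` for `◇F`,
any Maximizer strategy `σ`, any `k ≥ 0`, and any `l` that is a global lower bound on the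
values of all unknown states, for every state `s`:
`V(s) ≥ inf_τ ( P_s^{σ,τ}(◇^{≤k}F) + P_s^{σ,τ}(□^{≤k}S?)·l )`. -/
theorem stmt8 {S A : Type} [Fintype S] [DecidableEq S]
    (δ : S → A → S → ℝ) (Av : S → Finset A) (isMax : S → Bool)
    (F Z SQ : Finset S)
    (hδ0 : ∀ s a s', 0 ≤ δ s a s')
    (hδ1 : ∀ s, ∀ a ∈ Av s, ∑ s' : S, δ s a s' = 1)
    (hAv : ∀ s, (Av s).Nonempty)
    (hpart : ∀ s, s ∈ SQ ↔ s ∉ F ∧ s ∉ Z)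
    (hZ : ∀ s ∈ Z, ∀ σ τ : Strat Av, pReach δ F isMax σ.1 τ.1 s = 0)
    (τstar : Strat Av)
    (hopt : ∀ s, (⨆ σ : Strat Av, pReach δ F isMax σ.1 τstar.1 s)
      = gameValue δ Av F isMax s)
    (σ : Strat Av) (k : ℕ) (l : ℝ)
    (hl : ∀ s' ∈ SQ, l ≤ gameValue δ Av F isMax s') :
    ∀ s : S,
      (⨅ τ : Strat Av,
        reachB δ F isMax σ.1 τ.1 k [] s + stayB δ SQ isMax σ.1 τ.1 k [] s * l)
      ≤ gameValue δ Av F isMax s := by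
  intro s
  have hne : Nonempty (Strat Av) := strat_nonempty Av hAv
  have hlW : ∀ s' ∈ SQ, ∀ τ' : Strat Av, l ≤ Wv δ Av isMax F τ' s' := fun s' hs' τ' =>
    (hl s' hs').trans (gameValue_le_Wv δ Av isMax F hδ0 hδ1 hAv τ' s')
  have hbb : BddBelow (Set.range fun τ : Strat Av =>
      reachB δ F isMax σ.1 τ.1 k [] s + stayB δ SQ isMax σ.1 τ.1 k [] s * l) := by
    refine ⟨-|l|, ?_⟩
    rintro x ⟨τ, rfl⟩
    dsimp only
    have h1 := reachB_nonneg δ isMax F hδ0 σ.1 τ.1 k [] s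
    have h2 := stayB_nonneg δ isMax SQ hδ0 σ.1 τ.1 k [] s
    have h3 := stayB_le_one δ Av isMax SQ hδ0 hδ1 σ τ k [] s
    rcases le_or_gt 0 l with hl0 | hl0
    · nlinarith [abs_nonneg l, mul_nonneg h2 hl0]
    · nlinarith [neg_abs_le l, mul_nonneg (sub_nonneg.2 h3) (neg_nonneg.2 hl0.le)]
  refine (ciInf_le hbb τstar).trans ?_
  have hm := main_ind δ Av isMax F Z SQ hδ0 hδ1 hAv hpart hZ l hlW k σ τstar s
  rw [← hopt s]
  exact hm
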